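/- (Estimate (6.8): improved second minimum via the uniform exponent ω̂_{n−1}.) Let ŵ be a real number with 1 < ŵ < ω̂_{n−1}(Θ). There exist constants C > 0 and H_0 > 0, depending only on n, Θ and ŵ, with the following property: for every real number ω > 0 and every primitive vector X ∈ ℤ^{n+1} with |X| ≥ H_0 and |y · X| = |X|^{−ω}, at which the symmetric convex body C' = {z ∈ ℝ^{n+1} : |z| ≤ |X| and |y · z| ≤ |X|^{−ω}} attains its first successive minimum (with respect to the lattice ℤ^{n+1}) equal to 1, the second successive minimum λ_2 of C' satisfies λ_2 ≤ C|X|^{−1 + ω/ŵ}. -/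

import Mathlib

open scoped BigOperators Pointwise

noncomputable section

/-- Coordinates of a degree-`r` multivector in `Λ^r(ℝ^{n+1})`, with respect to the
orthonormal basis formed by the wedge products `e_{i₁} ∧ ⋯ ∧ e_{i_r}` (`i₁ < ⋯ < i_r`)
of the standard basis vectors. -/
abbrev MultiVec (n r : ℕ) := {S : Finset (Fin (n + 1)) // S.card = r} → ℝ

/-- The Euclidean norm of a multivector. -/
def mvNorm {n r : ℕ} (X : MultiVec n r) : ℝ :=
  Real.sqrt (∑ S, X S ^ 2)

/-- The Euclidean norm of a vector of `ℝ^{n+1}`. -/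
def vNorm {n : ℕ} (x : Fin (n + 1) → ℝ) : ℝ :=
  Real.sqrt (∑ i, x i ^ 2)

/-- A multivector is integral if all its coordinates (in the basis of wedge products of
standard basis vectors) are integers; this encodes `X ∈ Λ^r(ℤ^{n+1})`. -/
def mvIntegral {n r : ℕ} (X : MultiVec n r) : Prop :=
  ∀ S, ∃ k : ℤ, X S = (k : ℝ)

/-- The wedge product `y ∧ X` of a vector `y ∈ ℝ^{n+1}` with a degree-`r` multivector `X`,
in coordinates. -/
def vWedge {n r : ℕ} (y : Fin (n + 1) → ℝ) (X : MultiVec n r) : MultiVec n (r + 1) :=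
  fun T => ∑ i ∈ T.1.attach,
    (-1 : ℝ) ^ (T.1.filter (· < i.1)).card * y i.1 *
      X ⟨T.1.erase i.1, by rw [Finset.card_erase_of_mem i.2, T.2]; omega⟩

/-- A vector of `ℝ^{n+1}` viewed as a degree-one multivector. -/
def vecToMulti {n : ℕ} (x : Fin (n + 1) → ℝ) : MultiVec n 1 :=
  fun S => ∑ i ∈ S.1, x i

/-- The wedge product `x 0 ∧ ⋯ ∧ x r` of `r` vectors of `ℝ^{n+1}`; its coordinate at an
`r`-element subset `S` is the corresponding `r × r` minor of the matrix whose columns are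
the `x j`. -/
def multiWedge {n r : ℕ} (x : Fin r → Fin (n + 1) → ℝ) : MultiVec n r :=
  fun S => Matrix.det (Matrix.of fun a b : Fin r => x b ((S.1.orderIsoOfFin S.2 a : Fin (n + 1))))

/-- The contraction (internal product) `y ⌟ Z` of a degree-`(r+1)` multivector `Z` by a
vector `y ∈ ℝ^{n+1}`: the unique degree-`r` multivector satisfying
`W · (y ⌟ Z) = (W ∧ y) · Z` for every degree-`r` multivector `W`, written in coordinates. -/
def vContract {n r : ℕ} (y : Fin (n + 1) → ℝ) (Z : MultiVec n (r + 1)) : MultiVec n r :=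
  fun S => ∑ i ∈ (S.1ᶜ).attach,
    (-1 : ℝ) ^ (S.1.filter (fun j => i.1 < j)).card * y i.1 *
      Z ⟨insert i.1 S.1, by
        rw [Finset.card_insert_of_notMem (Finset.mem_compl.mp i.2), S.2]⟩

/-- The point `y = (1, θ₁, …, θₙ) ∈ ℝ^{n+1}` of homogeneous coordinates of `Θ ∈ ℝⁿ`. -/
def yTheta {n : ℕ} (θ : Fin n → ℝ) : Fin (n + 1) → ℝ :=
  Fin.cons 1 θ

/-- The exponent `ω_d(Θ)`: the supremum (in `ℝ ∪ {±∞}`) of the real numbers `ω` for which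
there exist infinitely many nonzero integer multivectors `X ∈ Λ^{d+1}(ℤ^{n+1})` with
`|y ∧ X| ≤ |X|^{-ω}`. -/
def omegaExp (n : ℕ) (θ : Fin n → ℝ) (d : ℕ) : EReal :=
  sSup {w : EReal | ∃ ω : ℝ, w = (ω : EReal) ∧
    {X : MultiVec n (d + 1) | mvIntegral X ∧ X ≠ 0 ∧
      mvNorm (vWedge (yTheta θ) X) ≤ mvNorm X ^ (-ω)}.Infinite}

/-- `max_{0 ≤ i ≤ n} |x_i|` of an integer tuple, as a real number. -/
def maxAbs {n : ℕ} (x : Fin (n + 1) → ℤ) : ℝ :=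
  ((Finset.univ.sup (fun i => (x i).natAbs) : ℕ) : ℝ)

/-- `ω_0(Θ)` (Definition 1): the supremum (in `ℝ ∪ {±∞}`) of the real numbers `ω` for
which there exist infinitely many integer `(n+1)`-tuples `(x₀, …, xₙ)` with
`max_{1 ≤ i ≤ n} |x₀ θ_i - x_i| ≤ (max_{0 ≤ i ≤ n} |x_i|)^{-ω}`. -/
def omega0T (n : ℕ) (θ : Fin n → ℝ) : EReal :=
  sSup {w : EReal | ∃ ω : ℝ, w = (ω : EReal) ∧
    {x : Fin (n + 1) → ℤ |
      ∀ i : Fin n, |(x 0 : ℝ) * θ i - (x i.succ : ℝ)| ≤ maxAbs x ^ (-ω)}.Infinite}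

/-- `ω_{n-1}(Θ)` (Definition 1): the supremum (in `ℝ ∪ {±∞}`) of the real numbers `ω` for
which there exist infinitely many integer `(n+1)`-tuples `(x₀, …, xₙ)` with
`|x₀ + x₁θ₁ + ⋯ + xₙθₙ| ≤ (max_{0 ≤ i ≤ n} |x_i|)^{-ω}`. -/
def omegaLastT (n : ℕ) (θ : Fin n → ℝ) : EReal :=
  sSup {w : EReal | ∃ ω : ℝ, w = (ω : EReal) ∧
    {x : Fin (n + 1) → ℤ |
      |(x 0 : ℝ) + ∑ i : Fin n, (x i.succ : ℝ) * θ i| ≤ maxAbs x ^ (-ω)}.Infinite}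

/-- `ω̂_0(Θ)` (Definition 2). -/
def omegaHat0 (n : ℕ) (θ : Fin n → ℝ) : EReal :=
  sSup {w : EReal | ∃ ω : ℝ, w = (ω : EReal) ∧
    ∀ᶠ X : ℝ in Filter.atTop, ∃ x : Fin (n + 1) → ℤ, x ≠ 0 ∧
      (∀ j, |(x j : ℝ)| ≤ X) ∧
      ∀ i : Fin n, |(x 0 : ℝ) * θ i - (x i.succ : ℝ)| ≤ X ^ (-ω)}

/-- `ω̂_{n-1}(Θ)` (Definition 2). -/
def omegaHatLast (n : ℕ) (θ : Fin n → ℝ) : EReal :=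
  sSup {w : EReal | ∃ ω : ℝ, w = (ω : EReal) ∧
    ∀ᶠ X : ℝ in Filter.atTop, ∃ x : Fin (n + 1) → ℤ, x ≠ 0 ∧
      (∀ j, |(x j : ℝ)| ≤ X) ∧
      |(x 0 : ℝ) + ∑ i : Fin n, (x i.succ : ℝ) * θ i| ≤ X ^ (-ω)}

/-- The `r`-th compound of a subset `C` of `ℝ^{n+1}`: the convex hull in `Λ^r(ℝ^{n+1})`
of the wedge products `z₁ ∧ ⋯ ∧ z_r` of `r` elements of `C`. -/
def compoundBody {n : ℕ} (r : ℕ) (C : Set (Fin (n + 1) → ℝ)) : Set (MultiVec n r) :=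
  convexHull ℝ {Z | ∃ z : Fin r → Fin (n + 1) → ℝ, (∀ j, z j ∈ C) ∧ Z = multiWedge z}

/-- The `k`-th successive minimum of a subset `C` of `ℝ^{n+1}` with respect to the lattice
`ℤ^{n+1}`: the infimum of the `λ > 0` such that `λ • C` contains `k` linearly independent
integer points. -/
def succMin (n : ℕ) (C : Set (Fin (n + 1) → ℝ)) (k : ℕ) : ℝ :=
  sInf {lam : ℝ | 0 < lam ∧ ∃ v : Fin k → Fin (n + 1) → ℤ,
    LinearIndependent ℝ (fun j => fun i => ((v j i : ℝ))) ∧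
    ∀ j, (fun i => ((v j i : ℝ))) ∈ lam • C}

/-!
Choose `ω'` with `w_hat < ω' < ω̂_{n-1}(Θ)`, so that for all large `T` there is a nonzero integer
point `z` with `|z| ≪ T` and `|y · z| ≤ T^{-ω'}`. As `λ₁(C') = 1`, no nonzero integer point lies
in the interior of `C'`. Applied at a fixed threshold `T₁`, this forces `T₁ ≤ P := |X|^{ω/w_hat}`;
applied at `T = 2P`, where `|y · z| < |X|^{-ω}`, it forces `|X| ≤ |z| ≪ P`. Finally `z` is not a real
multiple of the primitive vector `X`: such a multiple would be a nonzero integral one, with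
`|y · z| ≥ |y · X|`. So `X` and `z` show `λ₂ ≤ |z| / |X| ≪ |X|^{-1 + ω/w_hat}`.
-/

def slab {n : ℕ} (y : Fin (n + 1) → ℝ) (H h : ℝ) : Set (Fin (n + 1) → ℝ) :=
  {z | vNorm z ≤ H ∧ |∑ i, y i * z i| ≤ h}

section Norms

variable {n : ℕ}

lemma vNorm_smul (c : ℝ) (x : Fin (n + 1) → ℝ) : vNorm (c • x) = |c| * vNorm x := by
  unfold vNorm
  rw [← Real.sqrt_sq_eq_abs, ← Real.sqrt_mul (sq_nonneg c), Finset.mul_sum]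
  simp only [Pi.smul_apply, smul_eq_mul, mul_pow]

lemma vNorm_le_sqrt_mul_of_abs_le {x : Fin (n + 1) → ℝ} {T : ℝ} (hT : 0 ≤ T)
    (h : ∀ i, |x i| ≤ T) : vNorm x ≤ √(n + 1) * T := by
  rw [← Real.sqrt_sq hT, ← Real.sqrt_mul (by positivity)]
  refine Real.sqrt_le_sqrt ?_
  calc ∑ i, x i ^ 2 ≤ ∑ _i : Fin (n + 1), T ^ 2 :=
        Finset.sum_le_sum fun i _ => sq_le_sq' (abs_le.mp (h i)).1 (abs_le.mp (h i)).2
    _ = (n + 1) * T ^ 2 := by simp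

lemma vNorm_pos {x : Fin (n + 1) → ℝ} (hx : x ≠ 0) : 0 < vNorm x := by
  obtain ⟨i, hi⟩ := Function.ne_iff.mp hx
  exact Real.sqrt_pos.mpr <| lt_of_lt_of_le (pow_two_pos_of_ne_zero hi)
    (Finset.single_le_sum (fun j _ => sq_nonneg (x j)) (Finset.mem_univ i))

lemma intCast_vec_ne_zero {z : Fin (n + 1) → ℤ} (hz : z ≠ 0) : (fun i => (z i : ℝ)) ≠ 0 :=
  fun h0 => hz (funext fun i => by simpa using congrFun h0 i)

end Norms

section SuccessiveMinima

variable {n : ℕ}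

lemma mem_smul_slab {y z : Fin (n + 1) → ℝ} {H h lam : ℝ} (hlam : 0 < lam)
    (hH : vNorm z ≤ lam * H) (hh : |∑ i, y i * z i| ≤ lam * h) : z ∈ lam • slab y H h := by
  rw [Set.mem_smul_set_iff_inv_smul_mem₀ hlam.ne']
  have hdot : ∑ i, y i * (lam⁻¹ • z) i = lam⁻¹ * ∑ i, y i * z i := by
    simp only [Finset.mul_sum, Pi.smul_apply, smul_eq_mul]
    exact Finset.sum_congr rfl fun i _ => by ring
  refine ⟨?_, ?_⟩
  · rwa [vNorm_smul, abs_inv, abs_of_pos hlam, inv_mul_le_iff₀ hlam]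
  · rwa [hdot, abs_mul, abs_inv, abs_of_pos hlam, inv_mul_le_iff₀ hlam]

lemma succMin_le {C : Set (Fin (n + 1) → ℝ)} {k : ℕ} {lam : ℝ} (hlam : 0 < lam)
    (v : Fin k → Fin (n + 1) → ℤ) (hv : LinearIndependent ℝ fun j i => (v j i : ℝ))
    (hmem : ∀ j, (fun i => (v j i : ℝ)) ∈ lam • C) : succMin n C k ≤ lam :=
  csInf_le ⟨0, fun _ hl => hl.1.le⟩ ⟨hlam, v, hv, hmem⟩

lemma succMin_two_le {C : Set (Fin (n + 1) → ℝ)} {lam : ℝ} (hlam : 0 < lam)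
    (u v : Fin (n + 1) → ℤ)
    (huv : LinearIndependent ℝ ![fun i => (u i : ℝ), fun i => (v i : ℝ)])
    (hu : (fun i => (u i : ℝ)) ∈ lam • C) (hv : (fun i => (v i : ℝ)) ∈ lam • C) :
    succMin n C 2 ≤ lam := by
  refine succMin_le hlam ![u, v] ?_ (Fin.forall_fin_two.mpr ⟨hu, hv⟩)
  convert huv using 1
  ext j : 1
  fin_cases j <;> rfl

lemma le_vNorm_or_le_abs_of_succMin_one_eq_one {y : Fin (n + 1) → ℝ} {H h : ℝ}
    (h1 : succMin n (slab y H h) 1 = 1) (hH : 0 < H) (hh : 0 < h)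
    {z : Fin (n + 1) → ℤ} (hz : z ≠ 0) :
    H ≤ vNorm (fun i => (z i : ℝ)) ∨ h ≤ |∑ i, y i * z i| := by
  by_contra! hlt
  have hzR := intCast_vec_ne_zero hz
  set lam := max (vNorm (fun i => (z i : ℝ)) / H) (|∑ i, y i * z i| / h)
  have hlam : 0 < lam := lt_max_of_lt_left (div_pos (vNorm_pos hzR) hH)
  have hlam1 : lam < 1 :=
    max_lt ((div_lt_one hH).mpr hlt.1) ((div_lt_one hh).mpr hlt.2)
  have hmem : (fun i => (z i : ℝ)) ∈ lam • slab y H h :=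
    mem_smul_slab hlam ((div_le_iff₀ hH).mp (le_max_left _ _))
      ((div_le_iff₀ hh).mp (le_max_right _ _))
  have := succMin_le (k := 1) hlam (fun _ => z) (linearIndependent_unique_iff.mpr hzR)
    fun _ => hmem
  linarith

end SuccessiveMinima

section Primitive

variable {n : ℕ}

lemma exists_intCast_eq_of_smul_eq {X z : Fin (n + 1) → ℤ} (hX : Finset.univ.gcd X = 1)
    {c : ℝ} (hc : c • (fun i => (X i : ℝ)) = fun i => (z i : ℝ)) : ∃ k : ℤ, c = k := by
  obtain ⟨a, ha⟩ := Finset.gcd_eq_sum_mul Finset.univ X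
  refine ⟨∑ i, z i * a i, ?_⟩
  have ha' : (1 : ℝ) = ∑ i, (X i : ℝ) * a i := by exact_mod_cast hX ▸ ha
  rw [← mul_one c, ha', Finset.mul_sum]
  push_cast
  refine Finset.sum_congr rfl fun i _ => ?_
  rw [← congrFun hc i, Pi.smul_apply, smul_eq_mul, mul_assoc]

lemma linearIndependent_of_primitive {X z : Fin (n + 1) → ℤ} (hX : Finset.univ.gcd X = 1)
    (hz : z ≠ 0) (y : Fin (n + 1) → ℝ) (hyz : |∑ i, y i * z i| < |∑ i, y i * X i|) :
    LinearIndependent ℝ ![fun i => (X i : ℝ), fun i => (z i : ℝ)] := by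
  have hX0 : (fun i => (X i : ℝ)) ≠ 0 := intCast_vec_ne_zero fun h0 => by
    simp [h0, Finset.gcd_eq_zero_iff.mpr] at hX
  refine (LinearIndependent.pair_iff' hX0).mpr fun c hc => ?_
  obtain ⟨k, rfl⟩ := exists_intCast_eq_of_smul_eq hX hc
  have hk : k ≠ 0 := by
    rintro rfl
    exact intCast_vec_ne_zero hz (by simpa using hc.symm)
  have hdot : ∑ i, y i * z i = k * ∑ i, y i * X i := by
    simp only [← congrFun hc, Pi.smul_apply, smul_eq_mul, Finset.mul_sum]
    exact Finset.sum_congr rfl fun i _ => by ring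
  have hk1 : (1 : ℝ) ≤ |(k : ℝ)| := by exact_mod_cast Int.one_le_abs hk
  rw [hdot, abs_mul] at hyz
  nlinarith [abs_nonneg (∑ i, y i * X i)]

end Primitive

lemma exists_approx_of_lt_omegaHatLast {n : ℕ} {θ : Fin n → ℝ} {w : ℝ}
    (hw : (w : EReal) < omegaHatLast n θ) :
    ∃ ω' > w, ∃ T₁ ≥ 1, ∀ T ≥ T₁, ∃ z : Fin (n + 1) → ℤ, z ≠ 0 ∧
      vNorm (fun i => (z i : ℝ)) ≤ √(n + 1) * T ∧ |∑ i, yTheta θ i * z i| ≤ T ^ (-ω') := by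
  obtain ⟨_, ⟨ω', rfl, hev⟩, hwω'⟩ := lt_sSup_iff.mp hw
  obtain ⟨T₁, hT₁⟩ := Filter.eventually_atTop.mp hev
  refine ⟨ω', EReal.coe_lt_coe_iff.mp hwω', max T₁ 1, le_max_right _ _, fun T hT => ?_⟩
  obtain ⟨z, hz0, hzT, hzy⟩ := hT₁ T (le_of_max_le_left hT)
  refine ⟨z, hz0, vNorm_le_sqrt_mul_of_abs_le (by linarith [le_of_max_le_right hT]) hzT, ?_⟩
  simpa only [Fin.sum_univ_succ, yTheta, Fin.cons_zero, Fin.cons_succ, one_mul, mul_comm]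
    using hzy

theorem estimate_6_8_general (n : ℕ) (θ : Fin n → ℝ)
    (w_hat : ℝ) (hw_hat1 : 1 < w_hat) (hw_hat : (w_hat : EReal) < omegaHatLast n θ) :
    ∃ C H₀ : ℝ, 0 < C ∧ 0 < H₀ ∧
      ∀ (ω : ℝ) (X : Fin (n + 1) → ℤ) (C' : Set (Fin (n + 1) → ℝ)),
        0 < ω →
        Finset.univ.gcd X = 1 →
        H₀ ≤ vNorm (fun i => ((X i : ℝ))) →
        |∑ i, yTheta θ i * (X i : ℝ)| = vNorm (fun i => ((X i : ℝ))) ^ (-ω) →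
        C' = {z : Fin (n + 1) → ℝ |
          vNorm z ≤ vNorm (fun i => ((X i : ℝ))) ∧
          |∑ i, yTheta θ i * z i| ≤ vNorm (fun i => ((X i : ℝ))) ^ (-ω)} →
        (fun i => ((X i : ℝ))) ∈ C' →
        succMin n C' 1 = 1 →
        succMin n C' 2 ≤ C * vNorm (fun i => ((X i : ℝ))) ^ (-1 + ω / w_hat) := by
  obtain ⟨ω', hω', T₁, hT₁, approx⟩ := exists_approx_of_lt_omegaHatLast hw_hat
  have hs : 1 ≤ √((n : ℝ) + 1) := Real.one_le_sqrt.mpr (by linarith [n.cast_nonneg (α := ℝ)])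
  refine ⟨2 * √(n + 1), 2 * √(n + 1) * T₁, by positivity, by positivity, ?_⟩
  rintro ω X C' hω hX hXH hXy rfl - h1
  set H := vNorm fun i => (X i : ℝ)
  set s := √((n : ℝ) + 1)
  have hH : 1 < H := by nlinarith
  set P := H ^ (ω / w_hat)
  have hP : 1 ≤ P := Real.one_le_rpow hH.le (by positivity)
  have hPω' : P ^ (-ω') ≤ H ^ (-ω) := calc
    P ^ (-ω') ≤ P ^ (-w_hat) := Real.rpow_le_rpow_of_exponent_le hP (by linarith)
    _ = H ^ (-ω) := by rw [← Real.rpow_mul (by linarith)]; field_simp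
  have interior_free := fun {z} (hz : z ≠ 0) =>
    le_vNorm_or_le_abs_of_succMin_one_eq_one h1 (by linarith) (by positivity) hz
  have hT₁P : T₁ ≤ P := by
    obtain ⟨z, hz0, hzN, hzy⟩ := approx T₁ le_rfl
    have hyz := ((interior_free hz0).resolve_left (by nlinarith)).trans hzy
    exact (Real.rpow_le_rpow_iff_of_neg (by linarith) (by linarith) (by linarith)).mp
      (hPω'.trans hyz)
  obtain ⟨z, hz0, hzN, hzy⟩ := approx (2 * P) (by linarith)
  have hzy' : |∑ i, yTheta θ i * z i| < H ^ (-ω) := calc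
    _ ≤ (2 * P) ^ (-ω') := hzy
    _ < P ^ (-ω') := Real.rpow_lt_rpow_of_neg (by linarith) (by linarith) (by linarith)
    _ ≤ H ^ (-ω) := hPω'
  have hHz : H ≤ s * (2 * P) := ((interior_free hz0).resolve_right (not_le.mpr hzy')).trans hzN
  have hlam : 1 ≤ 2 * s * P / H := (one_le_div (by linarith)).mpr (by linarith)
  have hexp : 2 * s * H ^ (-1 + ω / w_hat) = 2 * s * P / H := by
    rw [Real.rpow_add (by linarith), Real.rpow_neg_one]; ring
  rw [hexp]
  refine succMin_two_le (by linarith) X z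
    (linearIndependent_of_primitive hX hz0 _ (hXy ▸ hzy')) ?_ ?_
  · exact mem_smul_slab (by linarith) (le_mul_of_one_le_left (by linarith) hlam)
      (hXy ▸ le_mul_of_one_le_left (by positivity) hlam)
  · refine mem_smul_slab (by linarith) (hzN.trans_eq (by field_simp)) ?_
    exact hzy'.le.trans (le_mul_of_one_le_left (by positivity) hlam)

/-- **Estimate (6.8).** Let `1 < w_hat < ω̂_{n-1}(Θ)`. There are constants `C > 0` and
`H₀ > 0`, depending only on `n`, `Θ` and `w_hat`, such that: for every real `ω > 0` and
every primitive `X ∈ ℤ^{n+1}` with `|X| ≥ H₀` and `|y · X| = |X|^{-ω}`, at which the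
symmetric convex body `C' = {z ∈ ℝ^{n+1} : |z| ≤ |X|, |y · z| ≤ |X|^{-ω}}` attains its
first successive minimum (w.r.t. `ℤ^{n+1}`) equal to `1`, the second successive minimum
`λ₂` of `C'` satisfies `λ₂ ≤ C |X|^{-1 + ω/w_hat}`. -/
theorem estimate_6_8 (n : ℕ) (hn : 0 < n) (θ : Fin n → ℝ)
    (hθ : LinearIndependent ℚ (Fin.cons (1 : ℝ) θ))
    (w_hat : ℝ) (hw_hat1 : 1 < w_hat) (hw_hat : (w_hat : EReal) < omegaHatLast n θ) :
    ∃ C H₀ : ℝ, 0 < C ∧ 0 < H₀ ∧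
      ∀ (ω : ℝ) (X : Fin (n + 1) → ℤ) (C' : Set (Fin (n + 1) → ℝ)),
        0 < ω →
        Finset.univ.gcd X = 1 →
        H₀ ≤ vNorm (fun i => ((X i : ℝ))) →
        |∑ i, yTheta θ i * (X i : ℝ)| = vNorm (fun i => ((X i : ℝ))) ^ (-ω) →
        C' = {z : Fin (n + 1) → ℝ |
          vNorm z ≤ vNorm (fun i => ((X i : ℝ))) ∧
          |∑ i, yTheta θ i * z i| ≤ vNorm (fun i => ((X i : ℝ))) ^ (-ω)} →
        (fun i => ((X i : ℝ))) ∈ C' →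
        succMin n C' 1 = 1 →
        succMin n C' 2 ≤ C * vNorm (fun i => ((X i : ℝ))) ^ (-1 + ω / w_hat) :=
  estimate_6_8_general n θ w_hat hw_hat1 hw_hat
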